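/- arXiv:2103.07644 — 2 statements merged into one kernel-verified Lean document; each statement's English description precedes it below -/
import Mathlib

section
/- An Alexandrov discrete space X is connected if and only if it is digitally pathwise connected, i.e., for any two points x, y ∈ X there is a finite sequence x = x₀, x₁, …, xₙ = y such that each two-point set {xᵢ, xᵢ₊₁} is connected. -/
/-- Extending a digital path by one adjacent step. -/
lemma digital_path_step {X : Type*} [TopologicalSpace X] {x a b : X}
    (h : ∃ (n : ℕ) (f : ℕ → X), f 0 = x ∧ f n = a ∧
        ∀ i < n, IsConnected ({f i, f (i + 1)} : Set X))
    (hab : IsConnected ({a, b} : Set X)) :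
    ∃ (n : ℕ) (f : ℕ → X), f 0 = x ∧ f n = b ∧
        ∀ i < n, IsConnected ({f i, f (i + 1)} : Set X) := by
  obtain ⟨n, f, h0, hn, hconn⟩ := h
  refine ⟨n + 1, fun i => if i ≤ n then f i else b, by simp [h0], by simp, ?_⟩
  intro i hi
  rcases lt_or_eq_of_le (Nat.lt_succ_iff.mp hi) with hi' | hi'
  · simpa [hi'.le, Nat.succ_le_of_lt hi'] using hconn i hi'
  · subst hi'
    simpa [hn] using hab

/-- If `z` is in every open set containing `y`, then `{y, z}` is connected. -/
lemma pair_connected_of_mem_all {X : Type*} [TopologicalSpace X] {y z : X}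
    (h : ∀ U : Set X, IsOpen U → y ∈ U → z ∈ U) :
    IsConnected ({y, z} : Set X) := by
  refine ⟨⟨y, by simp⟩, ?_⟩
  have hz : IsPreconnected ({z} : Set X) := isPreconnected_singleton
  refine hz.subset_closure (by simp) ?_
  intro w hw
  rcases hw with hw | hw
  · subst hw
    rw [mem_closure_iff]
    intro U hU hyU
    exact ⟨z, h U hU hyU, rfl⟩
  · simp at hw; subst hw; exact subset_closure rfl

theorem alexandrov_connected_iff_digitally_pathwise_connected
    (X : Type*) [TopologicalSpace X] [Nonempty X]
    (hX : ∀ S : Set (Set X), (∀ s ∈ S, IsOpen s) → IsOpen (⋂₀ S)) :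
    ConnectedSpace X ↔
      ∀ x y : X, ∃ (n : ℕ) (f : ℕ → X), f 0 = x ∧ f n = y ∧
        ∀ i < n, IsConnected ({f i, f (i + 1)} : Set X) := by
  constructor
  · intro hc x y
    -- minimal open neighborhood
    set K : X → Set X := fun a => ⋂₀ {U : Set X | IsOpen U ∧ a ∈ U} with hK
    have hKopen : ∀ a, IsOpen (K a) := fun a => hX _ (fun s hs => hs.1)
    have hKmem : ∀ a, a ∈ K a := fun a => by
      intro U hU; exact hU.2
    have hKadj : ∀ a z, z ∈ K a → IsConnected ({a, z} : Set X) := by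
      intro a z hz
      exact pair_connected_of_mem_all (fun U hU haU => hz U ⟨hU, haU⟩)
    set R : Set X := {y | ∃ (n : ℕ) (f : ℕ → X), f 0 = x ∧ f n = y ∧
        ∀ i < n, IsConnected ({f i, f (i + 1)} : Set X)} with hR
    have hxR : x ∈ R := ⟨0, fun _ => x, rfl, rfl, by omega⟩
    have hRopen : IsOpen R := by
      rw [isOpen_iff_mem_nhds]
      intro a ha
      refine Filter.mem_of_superset ((hKopen a).mem_nhds (hKmem a)) ?_
      intro z hz
      exact digital_path_step ha (hKadj a z hz)
    have hRclosed : IsClosed R := by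
      rw [← isOpen_compl_iff, isOpen_iff_mem_nhds]
      intro a ha
      refine Filter.mem_of_superset ((hKopen a).mem_nhds (hKmem a)) ?_
      intro z hz hzR
      exact ha (digital_path_step hzR (by rw [Set.pair_comm]; exact hKadj a z hz))
    have hcl : IsClopen R := ⟨hRclosed, hRopen⟩
    have := hcl.eq_univ ⟨x, hxR⟩
    rw [Set.eq_univ_iff_forall] at this
    exact this y
  · intro h
    inhabit X
    rw [connectedSpace_iff_connectedComponent]
    refine ⟨default, Set.eq_univ_of_forall fun y => ?_⟩
    obtain ⟨n, f, h0, hn, hconn⟩ := h default y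
    subst hn
    suffices H : ∀ m, (∀ i < m, IsConnected ({f i, f (i + 1)} : Set X)) →
        f m ∈ connectedComponent default by
      exact H n hconn
    intro m
    induction m with
    | zero => intro _; rw [h0]; exact mem_connectedComponent
    | succ k ih =>
      intro hc
      have hk : f k ∈ connectedComponent default := ih (fun i hi => hc i (by omega))
      have hpair : f (k + 1) ∈ connectedComponent (f k) :=
        (hc k (by omega)).isPreconnected.subset_connectedComponent (by simp) (by simp)
      rwa [← connectedComponent_eq hk] at hpair
end

section
/- Let X be an Alexandrov discrete space and G its connectedness graph. Then X is a connected topological space if and only if G is a connected graph. -/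
/-- The connectedness graph of a topological space: distinct points are adjacent
iff the two-point subspace they form is connected. -/
def connectednessGraph (X : Type*) [TopologicalSpace X] : SimpleGraph X where
  Adj x y := x ≠ y ∧ IsConnected ({x, y} : Set X)
  symm := by
    constructor
    intro x y ⟨hne, hconn⟩
    exact ⟨hne.symm, by rwa [Set.pair_comm]⟩
  loopless := by
    constructor
    intro x ⟨hne, _⟩
    exact hne rfl

/-!
A walk in the connectedness graph is a chain of connected pairs, so it stays inside one connected
component; this direction holds in every space. Conversely, in an Alexandrov discrete space the
open sets are exactly the sets closed under generalization, and a point `x` with `x ⤳ y` forms a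
connected pair with `y` (the pair lies in the closure of `{x}`). Hence the set of vertices reachable
from a point is closed under specialization in both directions, so it is clopen, hence everything
when `X` is connected.
-/

open Set

section

variable {X : Type*} [TopologicalSpace X]

theorem Specializes.isConnected_pair {x y : X} (h : x ⤳ y) : IsConnected ({x, y} : Set X) :=
  isConnected_singleton.subset_closure (singleton_subset_iff.2 (mem_insert x {y}))
    (insert_subset (subset_closure rfl) (singleton_subset_iff.2 (specializes_iff_mem_closure.1 h)))

theorem Specializes.connectednessGraph_reachable {x y : X} (h : x ⤳ y) :
    (connectednessGraph X).Reachable x y := by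
  by_cases hxy : x = y
  · exact hxy ▸ SimpleGraph.Reachable.refl x
  · exact SimpleGraph.Adj.reachable ⟨hxy, h.isConnected_pair⟩

theorem connectedComponent_eq_of_connectednessGraph_reachable {x y : X}
    (h : (connectednessGraph X).Reachable x y) : connectedComponent x = connectedComponent y := by
  obtain ⟨w⟩ := h
  induction w with
  | nil => rfl
  | cons hadj _ ih =>
    refine (connectedComponent_eq ?_).trans ih
    exact hadj.2.isPreconnected.subset_connectedComponent (mem_insert _ _)
      (mem_insert_of_mem _ rfl)

theorem ConnectedSpace.of_connectednessGraph_connected (h : (connectednessGraph X).Connected) :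
    ConnectedSpace X := by
  obtain ⟨x⟩ := h.nonempty
  refine connectedSpace_iff_connectedComponent.2 ⟨x, eq_univ_of_forall fun y => ?_⟩
  rw [connectedComponent_eq_of_connectednessGraph_reachable (h x y)]
  exact mem_connectedComponent

theorem isClopen_setOf_connectednessGraph_reachable [AlexandrovDiscrete X] (x : X) :
    IsClopen {y | (connectednessGraph X).Reachable x y} := by
  refine ⟨⟨?_⟩, ?_⟩ <;> rw [isOpen_iff_forall_specializes]
  · exact fun z y hzy hy hz => hy (hz.trans hzy.connectednessGraph_reachable)
  · exact fun z y hzy hy => hy.trans hzy.connectednessGraph_reachable.symm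

theorem connectednessGraph_connected [AlexandrovDiscrete X] [ConnectedSpace X] :
    (connectednessGraph X).Connected := by
  obtain ⟨x⟩ := ‹ConnectedSpace X›.toNonempty
  have hx : {y | (connectednessGraph X).Reachable x y} = univ :=
    (isClopen_setOf_connectednessGraph_reachable x).eq_univ ⟨x, SimpleGraph.Reachable.refl x⟩
  exact (SimpleGraph.connected_iff_exists_forall_reachable _).2 ⟨x, eq_univ_iff_forall.1 hx⟩

end

theorem alexandrov_connected_iff_graph_connected (X : Type*) [TopologicalSpace X]
    (hX : ∀ S : Set (Set X), (∀ s ∈ S, IsOpen s) → IsOpen (⋂₀ S)) :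
    ConnectedSpace X ↔ (connectednessGraph X).Connected := by
  have : AlexandrovDiscrete X := ⟨hX⟩
  exact ⟨fun _ => connectednessGraph_connected, ConnectedSpace.of_connectednessGraph_connected⟩
end
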